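/- arXiv:2002.10442 — 2 statements merged into one kernel-verified Lean document; each statement's English description precedes it below -/
import Mathlib

section
/- Suppose ψ ∈ R is nonzero with D̄(ψ) = (∂F/∂u_1)·ψ, r ≥ 1, H_r = 0, and (when r > 1) H_1, …, H_{r−1} are nonzero in Frac(R). Let 𝓜 be the operator given by the Laplace factorization formula. Then 𝓜(W) is a symmetry of the equation u_{xy} = F for every x-integral W (the symmetry condition being understood in Frac(R)). -/
/-!
Write a, b, c for F_{u₁}, F_{ū₁}, F_{u₀}. The symmetry operator factors as
DD̄ − aD − bD̄ − c = (D − b)(D̄ − a) − H₁. Put A_k = a + D̄ log(H₁⋯H_k); the recursion defining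
the Laplace invariants says exactly that D(A_k) − D̄(b) = H_k − H_{k+1}. Call q a stage of level k
if (D − b)(D̄ − A_k) q = H_{k+1} q. Then H₁⋯H_{r−1}ψW is a stage of level r − 1, because
D̄ acts on it as multiplication by A_{r−1} and H_r = 0. Since D and D̄ commute, the Laplace step
q ↦ (D − b)q / H_k lowers the level by one: (D̄ − A_{k−1})((D − b)q / H_k) = q. The r − 1 steps
of 𝓜 therefore produce a stage of level 0, which is a symmetry.
-/

open MvPolynomial

noncomputable section

/-- Variables of the ring R = K[x, y, u₀, u₁, …, ū₁, ū₂, …].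
`Var.ubar j` denotes the variable ū_{j+1}, so that `Var.ubar 0 = ū₁`. -/
inductive Var : Type
  | x : Var
  | y : Var
  | u : ℕ → Var
  | ubar : ℕ → Var
  deriving DecidableEq

/-- The ring R. -/
abbrev RR (K : Type*) [CommSemiring K] : Type _ := MvPolynomial Var K

variable {K : Type*} [Field K] [CharZero K]

/-- The subring 𝓕 ⊆ R of polynomials not involving any ū_j. -/
def Fcal (K : Type*) [CommSemiring K] : Subalgebra K (RR K) :=
  MvPolynomial.supported K {v : Var | ∀ j : ℕ, v ≠ Var.ubar j}

/-- The set of variables that F may involve: x, y, u₀, u₁, ū₁. -/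
def Fvars : Set Var := {Var.x, Var.y, Var.u 0, Var.u 1, Var.ubar 0}

/-- `D` and `Dbar` are the total derivatives with respect to x and y on solutions
of u_{xy} = F, i.e. the K-derivations determined by mutual recursion by
D(x) = 1, D(y) = 0, D(uᵢ) = u_{i+1}, D(ū_i) = D̄^{i-1}(F) (i ≥ 1);
D̄(y) = 1, D̄(x) = 0, D̄(u₀) = ū₁, D̄(u_i) = D^{i-1}(F) (i ≥ 1), D̄(ū_i) = ū_{i+1}.
(Recall `Var.ubar j` denotes ū_{j+1}.)  -/
structure IsTotalDerPair (F : RR K) (D Dbar : Derivation K (RR K) (RR K)) : Prop where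
  hDx : D (X Var.x) = 1
  hDy : D (X Var.y) = 0
  hDu : ∀ i : ℕ, D (X (Var.u i)) = X (Var.u (i + 1))
  hDubar : ∀ j : ℕ, D (X (Var.ubar j)) = (⇑Dbar)^[j] F
  hDbary : Dbar (X Var.y) = 1
  hDbarx : Dbar (X Var.x) = 0
  hDbaru0 : Dbar (X (Var.u 0)) = X (Var.ubar 0)
  hDbaru : ∀ i : ℕ, Dbar (X (Var.u (i + 1))) = (⇑D)^[i] F
  hDbarubar : ∀ j : ℕ, Dbar (X (Var.ubar j)) = X (Var.ubar (j + 1))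

/-- `g` is a symmetry of the equation u_{xy} = F:
D(D̄(g)) − F_{u₁}·D(g) − F_{ū₁}·D̄(g) − F_{u₀}·g = 0. -/
def IsSymmetry (F : RR K) (D Dbar : Derivation K (RR K) (RR K)) (g : RR K) : Prop :=
  D (Dbar g) - pderiv (Var.u 1) F * D g - pderiv (Var.ubar 0) F * Dbar g
    - pderiv (Var.u 0) F * g = 0

/-- The differential operator Σ_{i=0}^k ξ_i·Df^i applied to `a`. -/
def opApply {A : Type*} [CommRing A] (Df : A → A) (ξ : ℕ → A) (k : ℕ) (a : A) : A :=
  ∑ i ∈ Finset.range (k + 1), ξ i * Df^[i] a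

/-- `ξ 0, …, ξ k` are the coefficients of an x-symmetry driver of order `k`:
`ξ k ≠ 0` and Σ ξ_i·D^i maps every x-integral to a symmetry. -/
def IsDriver (F : RR K) (D Dbar : Derivation K (RR K) (RR K)) (k : ℕ) (ξ : ℕ → RR K) : Prop :=
  ξ k ≠ 0 ∧ ∀ W : RR K, Dbar W = 0 → IsSymmetry F D Dbar (opApply ⇑D ξ k W)

/-- The Fréchet derivative a_* = Σ_{i≥0} (∂a/∂uᵢ)·D^i applied to `g`. -/
def frechet (D : Derivation K (RR K) (RR K)) (a g : RR K) : RR K :=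
  ∑ᶠ i : ℕ, pderiv (Var.u i) a * (⇑D)^[i] g

/-- The Lie bracket [f, g] = g_*(f) − f_*(g). -/
def lieBracket (D : Derivation K (RR K) (RR K)) (f g : RR K) : RR K :=
  frechet D g f - frechet D f g

/-- The fraction field Frac(R). -/
abbrev FF (K : Type*) [Field K] : Type _ := FractionRing (RR K)

/-- `DF` extends the derivation `D` of R to the fraction field Frac(R). -/
def ExtendsTo (D : Derivation K (RR K) (RR K)) (DF : Derivation K (FF K) (FF K)) : Prop :=
  ∀ p : RR K, DF (algebraMap (RR K) (FF K) p) = algebraMap (RR K) (FF K) (D p)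

/-- The Laplace invariant H₁ = −D(F_{u₁}) + F_{u₁}·F_{ū₁} + F_{u₀} (computed in R). -/
def H1R (F : RR K) (D : Derivation K (RR K) (RR K)) : RR K :=
  -(D (pderiv (Var.u 1) F)) + pderiv (Var.u 1) F * pderiv (Var.ubar 0) F
    + pderiv (Var.u 0) F

/-- The Laplace invariant H₀ = −D̄(F_{ū₁}) + F_{u₁}·F_{ū₁} + F_{u₀} (computed in R). -/
def H0R (F : RR K) (Dbar : Derivation K (RR K) (RR K)) : RR K :=
  -(Dbar (pderiv (Var.ubar 0) F)) + pderiv (Var.u 1) F * pderiv (Var.ubar 0) F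
    + pderiv (Var.u 0) F

/-- The sequence of Laplace invariants in Frac(R), defined by
H_{i+1} = 2H_i − H_{i−1} − D(D̄(H_i)/H_i) (whenever H_i ≠ 0; division is the field
division of Frac(R)). -/
def Hseq (Df Dbarf : FF K → FF K) (H0 H1 : FF K) : ℕ → FF K
  | 0 => H0
  | 1 => H1
  | (n + 2) =>
      2 * Hseq Df Dbarf H0 H1 (n + 1) - Hseq Df Dbarf H0 H1 n
        - Df (Dbarf (Hseq Df Dbarf H0 H1 (n + 1)) / Hseq Df Dbarf H0 H1 (n + 1))

/-- Auxiliary composition: `lapAux Df c H j g` is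
(1/H₁)(D − c) ∘ (1/H₂)(D − c) ∘ ⋯ ∘ (1/H_j)(D − c) ∘ g. -/
def lapAux (Df : FF K → FF K) (c : FF K) (H : ℕ → FF K) : ℕ → (FF K → FF K) → FF K → FF K
  | 0, g, a => g a
  | (j + 1), g, a => lapAux Df c H j (fun b => (Df (g b) - c * g b) / H (j + 1)) a

/-- The Laplace factorization formula: for r > 1,
𝓜 = (1/H₁)(D − F_{ū₁}) ∘ ⋯ ∘ (1/H_{r−1})(D − F_{ū₁}) ∘ (H_{r−1}⋯H₁·ψ ·);
for r = 1, 𝓜 is multiplication by ψ. -/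
def lapM (Df : FF K → FF K) (c : FF K) (H : ℕ → FF K) (ψ : FF K) (r : ℕ) : FF K → FF K :=
  lapAux Df c H (r - 1) (fun a => (∏ i ∈ Finset.Icc 1 (r - 1), H i) * ψ * a)

/-- The symmetry condition, understood in Frac(R). -/
def IsSymmetryFF (F : RR K) (DF DbarF : Derivation K (FF K) (FF K)) (g : FF K) : Prop :=
  DF (DbarF g) - algebraMap (RR K) (FF K) (pderiv (Var.u 1) F) * DF g
    - algebraMap (RR K) (FF K) (pderiv (Var.ubar 0) F) * DbarF g
    - algebraMap (RR K) (FF K) (pderiv (Var.u 0) F) * g = 0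

open Finset

theorem Derivation.eq_of_forall_apply_algebraMap {R A L : Type*} [CommRing R] [CommRing A]
    [Field L] [Algebra A L] [IsFractionRing A L] [Algebra R L] {D₁ D₂ : Derivation R L L}
    (h : ∀ p, D₁ (algebraMap A L p) = D₂ (algebraMap A L p)) : D₁ = D₂ := by
  ext z
  obtain ⟨p, q, -, rfl⟩ := IsFractionRing.div_surjective (A := A) z
  rw [Derivation.leibniz_div, Derivation.leibniz_div, h, h]

section LaplaceCascade

variable {R L : Type*} [CommRing R] [Field L] [Algebra R L]

theorem Derivation.apply_prod_eq_sum_div_mul (Dv : Derivation R L L) {ι : Type*} (f : ι → L)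
    (s : Finset ι) (hs : ∀ i ∈ s, f i ≠ 0) :
    Dv (∏ i ∈ s, f i) = (∑ i ∈ s, Dv (f i) / f i) * ∏ i ∈ s, f i := by
  classical
  induction s using Finset.induction_on with
  | empty => simp
  | insert x s hx ih =>
    have hx0 : f x ≠ 0 := hs x (mem_insert_self x s)
    rw [prod_insert hx, sum_insert hx, Derivation.leibniz,
      ih fun i hi => hs i (mem_insert_of_mem hi), smul_eq_mul, smul_eq_mul]
    field_simp
    ring

variable (D Db : Derivation R L L)

def cascadeCoeff (a : L) (H : ℕ → L) (k : ℕ) : L :=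
  a + ∑ i ∈ Icc 1 k, Db (H i) / H i

theorem cascadeCoeff_zero (a : L) (H : ℕ → L) : cascadeCoeff Db a H 0 = a := by
  simp [cascadeCoeff]

theorem cascadeCoeff_succ (a : L) (H : ℕ → L) (k : ℕ) :
    cascadeCoeff Db a H (k + 1) = cascadeCoeff Db a H k + Db (H (k + 1)) / H (k + 1) := by
  rw [cascadeCoeff, cascadeCoeff, sum_Icc_succ_top (by omega), add_assoc]

def IsCascadeStage (b A h q : L) : Prop :=
  D (Db q - A * q) - b * (Db q - A * q) = h * q

theorem isCascadeStage_zero_of_eq_mul {b A q : L} (hq : Db q = A * q) :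
    IsCascadeStage D Db b A 0 q := by
  simp [IsCascadeStage, hq]

variable {D Db}

theorem deriv_cascadeCoeff_sub {a b : L} {H : ℕ → L} (h01 : D a - Db b = H 0 - H 1)
    (hrec : ∀ k, H (k + 2) = 2 * H (k + 1) - H k - D (Db (H (k + 1)) / H (k + 1))) (k : ℕ) :
    D (cascadeCoeff Db a H k) - Db b = H k - H (k + 1) := by
  induction k with
  | zero => rwa [cascadeCoeff_zero]
  | succ k ih =>
    rw [cascadeCoeff_succ, map_add]
    linear_combination ih + hrec k

theorem IsCascadeStage.laplace_step (hcomm : ∀ z, D (Db z) = Db (D z)) {b A h h' q : L}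
    (hA : D A - Db b = h' - h) (hh' : h' ≠ 0) (hq : IsCascadeStage D Db b A h q) :
    IsCascadeStage D Db b (A - Db h' / h') h' ((D q - b * q) / h') := by
  have hDbX : Db (D q - b * q) = A * (D q - b * q) + h' * q := by
    have hDDbq : D (Db q) = D (Db q - A * q) + D A * q + A * D q := by
      rw [map_sub, Derivation.leibniz, smul_eq_mul, smul_eq_mul]
      ring
    rw [map_sub, Derivation.leibniz, smul_eq_mul, smul_eq_mul, ← hcomm, hDDbq]
    unfold IsCascadeStage at hq
    linear_combination hq + q * hA
  have hinv : Db ((D q - b * q) / h') - (A - Db h' / h') * ((D q - b * q) / h') = q := by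
    rw [Derivation.leibniz_div, hDbX, smul_eq_mul, smul_eq_mul, smul_eq_mul]
    field_simp
    ring
  rw [IsCascadeStage, hinv]
  field_simp

theorem IsCascadeStage.symmetry {a b c q : L}
    (hq : IsCascadeStage D Db b a (-D a + a * b + c) q) :
    D (Db q) - a * D q - b * Db q - c * q = 0 := by
  simp only [IsCascadeStage, map_sub, Derivation.leibniz, smul_eq_mul] at hq
  linear_combination hq

end LaplaceCascade

section FractionField

variable {K : Type*} [Field K]

theorem isCascadeStage_lapAux {D Db : Derivation K (FF K) (FF K)}
    (hcomm : ∀ z, D (Db z) = Db (D z)) {a b : FF K} {H : ℕ → FF K}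
    (h01 : D a - Db b = H 0 - H 1)
    (hrec : ∀ k, H (k + 2) = 2 * H (k + 1) - H k - D (Db (H (k + 1)) / H (k + 1)))
    (j : ℕ) (hH : ∀ i, 1 ≤ i → i ≤ j → H i ≠ 0) (g : FF K → FF K) (x : FF K)
    (hg : IsCascadeStage D Db b (cascadeCoeff Db a H j) (H (j + 1)) (g x)) :
    IsCascadeStage D Db b a (H 1) (lapAux D b H j g x) := by
  induction j generalizing g with
  | zero => rwa [cascadeCoeff_zero] at hg
  | succ j ih =>
    refine ih (fun i hi hij => hH i hi (by omega)) _ ?_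
    have hstep := hg.laplace_step hcomm (deriv_cascadeCoeff_sub h01 hrec (j + 1))
      (hH (j + 1) (by omega) le_rfl)
    rwa [cascadeCoeff_succ, add_sub_cancel_right] at hstep

namespace IsTotalDerPair

variable {F : RR K} {D Dbar : Derivation K (RR K) (RR K)}

theorem commutator_eq_zero (h : IsTotalDerPair F D Dbar) : ⁅D, Dbar⁆ = 0 := by
  refine MvPolynomial.derivation_ext fun v => ?_
  rw [Derivation.commutator_apply, Derivation.zero_apply, sub_eq_zero]
  rcases v with _ | _ | (_ | i) | j
  · simp [h.hDx, h.hDbarx]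
  · simp [h.hDy, h.hDbary]
  · rw [h.hDbaru0, h.hDu, h.hDbaru 0, h.hDubar 0]
    rfl
  · rw [h.hDbaru i, h.hDu, h.hDbaru (i + 1), Function.iterate_succ_apply']
  · rw [h.hDbarubar j, h.hDubar j, h.hDubar (j + 1), Function.iterate_succ_apply']

theorem comm_of_extendsTo (h : IsTotalDerPair F D Dbar) {DF DbarF : Derivation K (FF K) (FF K)}
    (hDF : ExtendsTo D DF) (hDbarF : ExtendsTo Dbar DbarF) (z : FF K) :
    DF (DbarF z) = DbarF (DF z) := by
  have hzero : ⁅DF, DbarF⁆ = 0 := Derivation.eq_of_forall_apply_algebraMap (A := RR K) fun p => by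
    rw [Derivation.commutator_apply, hDbarF, hDF, hDF, hDbarF, ← map_sub,
      ← Derivation.commutator_apply, h.commutator_eq_zero, Derivation.zero_apply, map_zero,
      Derivation.zero_apply]
  rw [← sub_eq_zero, ← Derivation.commutator_apply, hzero, Derivation.zero_apply]

end IsTotalDerPair

end FractionField

theorem statement7_general
    (F : RR K)
    (D Dbar : Derivation K (RR K) (RR K)) (hDD : IsTotalDerPair F D Dbar)
    (DF DbarF : Derivation K (FF K) (FF K))
    (hDF : ExtendsTo D DF) (hDbarF : ExtendsTo Dbar DbarF)
    (H : ℕ → FF K)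
    (hH : H = Hseq ⇑DF ⇑DbarF (algebraMap (RR K) (FF K) (H0R F Dbar))
      (algebraMap (RR K) (FF K) (H1R F D)))
    (ψ : RR K) (hψ : Dbar ψ = pderiv (Var.u 1) F * ψ)
    (r : ℕ) (hr : 1 ≤ r) (hHr : H r = 0)
    (hHnz : ∀ i : ℕ, 1 ≤ i → i < r → H i ≠ 0) :
    ∀ W : RR K, Dbar W = 0 →
      IsSymmetryFF F DF DbarF
        (lapM ⇑DF (algebraMap (RR K) (FF K) (pderiv (Var.ubar 0) F)) H
          (algebraMap (RR K) (FF K) ψ) r (algebraMap (RR K) (FF K) W)) := by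
  intro W hW
  obtain ⟨n, rfl⟩ : ∃ n, r = n + 1 := ⟨r - 1, by omega⟩
  set a := algebraMap (RR K) (FF K) (pderiv (Var.u 1) F)
  set b := algebraMap (RR K) (FF K) (pderiv (Var.ubar 0) F)
  set c := algebraMap (RR K) (FF K) (pderiv (Var.u 0) F)
  have hcomm := hDD.comm_of_extendsTo hDF hDbarF
  have hH1 : H 1 = -DF a + a * b + c := by
    simp only [hH, Hseq, H1R, a, b, c, hDF (pderiv (Var.u 1) F), map_add, map_neg, map_mul]
  have h01 : DF a - DbarF b = H 0 - H 1 := by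
    rw [hH1]
    simp only [hH, Hseq, H0R, a, b, c, hDbarF (pderiv (Var.ubar 0) F), map_add, map_neg, map_mul]
    ring
  have hrec : ∀ k, H (k + 2) = 2 * H (k + 1) - H k - DF (DbarF (H (k + 1)) / H (k + 1)) :=
    fun k => by rw [hH]; rfl
  have hprod := DbarF.apply_prod_eq_sum_div_mul H (Icc 1 n) fun i hi =>
    hHnz i (mem_Icc.mp hi).1 (Nat.lt_succ_of_le (mem_Icc.mp hi).2)
  set q := (∏ i ∈ Icc 1 n, H i) * algebraMap (RR K) (FF K) ψ * algebraMap (RR K) (FF K) W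
  have hq : DbarF q = cascadeCoeff DbarF a H n * q := by
    simp only [q, Derivation.leibniz, hDbarF ψ, hDbarF W, hψ, hW, hprod, cascadeCoeff, map_mul,
      map_zero, smul_eq_mul]
    ring
  have hinit := isCascadeStage_zero_of_eq_mul DF DbarF (b := b) hq
  rw [← hHr] at hinit
  have hfinal := isCascadeStage_lapAux hcomm h01 hrec n (fun i hi hin => hHnz i hi (by omega))
    (fun w => (∏ i ∈ Icc 1 n, H i) * algebraMap (RR K) (FF K) ψ * w) (algebraMap (RR K) (FF K) W)
    hinit
  rw [hH1] at hfinal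
  rw [IsSymmetryFF, lapM, Nat.add_sub_cancel]
  exact hfinal.symmetry

/-- if ψ ≠ 0 satisfies D̄(ψ) = F_{u₁}·ψ, H_r = 0 and H₁,…,H_{r−1} ≠ 0,
then the operator 𝓜 of the Laplace factorization formula maps every x-integral to a
symmetry (understood in Frac(R)). -/
theorem statement7
    (F : RR K) (hF : F ∈ MvPolynomial.supported K Fvars)
    (D Dbar : Derivation K (RR K) (RR K)) (hDD : IsTotalDerPair F D Dbar)
    (DF DbarF : Derivation K (FF K) (FF K))
    (hDF : ExtendsTo D DF) (hDbarF : ExtendsTo Dbar DbarF)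
    (H : ℕ → FF K)
    (hH : H = Hseq ⇑DF ⇑DbarF (algebraMap (RR K) (FF K) (H0R F Dbar))
      (algebraMap (RR K) (FF K) (H1R F D)))
    (ψ : RR K) (hψ0 : ψ ≠ 0) (hψ : Dbar ψ = pderiv (Var.u 1) F * ψ)
    (r : ℕ) (hr : 1 ≤ r) (hHr : H r = 0)
    (hHnz : ∀ i : ℕ, 1 ≤ i → i < r → H i ≠ 0) :
    ∀ W : RR K, Dbar W = 0 →
      IsSymmetryFF F DF DbarF
        (lapM ⇑DF (algebraMap (RR K) (FF K) (pderiv (Var.ubar 0) F)) H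
          (algebraMap (RR K) (FF K) ψ) r (algebraMap (RR K) (FF K) W)) :=
  statement7_general F D Dbar hDD DF DbarF hDF hDbarF H hH ψ hψ r hr hHr hHnz
end
end

section
/- Let W ∈ 𝓕 be an x-integral of the equation u_{xy} = F and let g ∈ R be a symmetry. Then D̄( W_*(g) ) = 0, i.e. the Fréchet derivative of W applied to any symmetry is again an x-integral. -/
open MvPolynomial

/-!
`W_*(g)` is the value at `W` of the evolutionary derivation `E_g` with characteristic `g`
(`uᵢ ↦ Dⁱ g`, `ūᵢ ↦ D̄ⁱ g`). The symmetry equation says exactly that `E_g F = D D̄ g`, because `F`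
involves only `x, y, u₀, u₁, ū₁`. Since `D` preserves the polynomials not involving `ū₂, ū₃, …`,
on which `E_g` commutes with `D`, we get `E_g (Dⁱ F) = Dⁱ⁺¹ D̄ g`; together with `[D, D̄] = 0`
this makes `E_g` commute with `D̄` on every generator. Hence `D̄ (W_* g) = E_g (D̄ W) = 0`.
-/

namespace MvPolynomial

variable {R σ : Type*} [CommSemiring R]

theorem derivation_eq_sum_pderiv (d : Derivation R (MvPolynomial σ R) (MvPolynomial σ R))
    {p : MvPolynomial σ R} {s : Finset σ} (hp : p.vars ⊆ s) :
    d p = ∑ i ∈ s, pderiv i p * d (X i) := by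
  classical
  let d' : Derivation R (MvPolynomial σ R) (MvPolynomial σ R) := ∑ i ∈ s, d (X i) • pderiv i
  have hd' (q : MvPolynomial σ R) : d' q = ∑ i ∈ s, pderiv i q * d (X i) := by
    rw [← Derivation.coeFnAddMonoidHom_apply, map_sum, Finset.sum_apply]
    simp [mul_comm]
  rw [← hd']
  refine derivation_eq_of_forall_mem_vars (D₂ := d') (fun i hi => ?_)
  simp [hd', pderiv_X, Pi.single_apply, hp hi]

theorem derivation_eq_finsum_pderiv (d : Derivation R (MvPolynomial σ R) (MvPolynomial σ R))
    (p : MvPolynomial σ R) : d p = ∑ᶠ i, pderiv i p * d (X i) := by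
  rw [finsum_eq_sum_of_support_subset _ (s := p.vars), derivation_eq_sum_pderiv d subset_rfl]
  intro i hi
  by_contra h
  exact hi (by simp [pderiv_eq_zero_of_notMem_vars h])

theorem derivation_mem_supported {s : Set σ}
    (d : Derivation R (MvPolynomial σ R) (MvPolynomial σ R))
    (hd : ∀ i ∈ s, d (X i) ∈ supported R s) {p : MvPolynomial σ R} (hp : p ∈ supported R s) :
    d p ∈ supported R s := by
  induction hp using Algebra.adjoin_induction with
  | mem q hq => obtain ⟨i, hi, rfl⟩ := hq; exact hd i hi
  | algebraMap r => simp [algebraMap_eq, derivation_C]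
  | add p q _ _ hp hq => rw [map_add]; exact add_mem hp hq
  | mul p q hp' hq' hp hq =>
    rw [Derivation.leibniz, smul_eq_mul, smul_eq_mul]
    exact add_mem (mul_mem hp' hq) (mul_mem hq' hp)

end MvPolynomial

theorem Set.MapsTo.iterate_apply_comm {α : Type*} {f g : α → α} {s : Set α}
    (hf : Set.MapsTo f s s) (h : ∀ x ∈ s, g (f x) = f (g x)) {x : α} (hx : x ∈ s) (n : ℕ) :
    g (f^[n] x) = f^[n] (g x) := by
  induction n generalizing x with
  | zero => rfl
  | succ n ih =>
    rw [Function.iterate_succ_apply, Function.iterate_succ_apply, ih (hf hx), h x hx]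

theorem Derivation.commute_of_commutator_eq_zero {R A : Type*} [CommRing R] [CommRing A]
    [Algebra R A] {D₁ D₂ : Derivation R A A} (h : ⁅D₁, D₂⁆ = 0) : Function.Commute ⇑D₁ ⇑D₂ :=
  fun a => sub_eq_zero.1 <| by simpa [Derivation.commutator_apply] using DFunLike.congr_fun h a

section Symmetries

variable {K : Type*} [Field K] {F : RR K} {D Dbar : Derivation K (RR K) (RR K)} {g : RR K}

theorem IsTotalDerPair.commute (hDD : IsTotalDerPair F D Dbar) : Function.Commute ⇑D ⇑Dbar := by
  obtain ⟨hDx, hDy, hDu, hDubar, hDbary, hDbarx, hDbaru0, hDbaru, hDbarubar⟩ := hDD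
  refine Derivation.commute_of_commutator_eq_zero <| derivation_ext fun v => ?_
  rw [Derivation.commutator_apply, Derivation.zero_apply, sub_eq_zero]
  cases v with
  | x => simp [hDx, hDbarx]
  | y => simp [hDy, hDbary]
  | u i =>
    cases i with
    | zero => simp [hDu, hDbaru0, hDbaru, hDubar]
    | succ i => simp [hDu, hDbaru, Function.iterate_succ_apply']
  | ubar j => simp [hDubar, hDbarubar, Function.iterate_succ_apply']

variable (D Dbar g) in
noncomputable def evolutionaryDerivation : Derivation K (RR K) (RR K) :=
  mkDerivation K fun
    | .x | .y => 0
    | .u i => D^[i] g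
    | .ubar j => Dbar^[j + 1] g

@[simp]
theorem evolutionaryDerivation_X_x : evolutionaryDerivation D Dbar g (X .x) = 0 :=
  mkDerivation_X K _ _

@[simp]
theorem evolutionaryDerivation_X_y : evolutionaryDerivation D Dbar g (X .y) = 0 :=
  mkDerivation_X K _ _

@[simp]
theorem evolutionaryDerivation_X_u (i : ℕ) :
    evolutionaryDerivation D Dbar g (X (.u i)) = D^[i] g :=
  mkDerivation_X K _ _

@[simp]
theorem evolutionaryDerivation_X_ubar (j : ℕ) :
    evolutionaryDerivation D Dbar g (X (.ubar j)) = Dbar^[j + 1] g :=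
  mkDerivation_X K _ _

def varsBelowUbarTwo : Set Var := {v | ∀ j, v ≠ .ubar (j + 1)}

theorem supported_Fvars_le_varsBelowUbarTwo :
    supported K Fvars ≤ supported K varsBelowUbarTwo :=
  supported_mono <| by rintro _ (rfl | rfl | rfl | rfl | rfl) <;> simp [varsBelowUbarTwo]

theorem IsTotalDerPair.mapsTo_supported_varsBelowUbarTwo (hF : F ∈ supported K Fvars)
    (hDD : IsTotalDerPair F D Dbar) :
    Set.MapsTo D (supported K varsBelowUbarTwo) (supported K varsBelowUbarTwo) := by
  refine fun p hp => derivation_mem_supported D (fun v hv => ?_) hp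
  cases v with
  | x => simp [hDD.hDx]
  | y => simp [hDD.hDy]
  | u i => simp [hDD.hDu, varsBelowUbarTwo]
  | ubar j =>
    cases j with
    | zero => simpa [hDD.hDubar] using supported_Fvars_le_varsBelowUbarTwo hF
    | succ j => exact absurd rfl (hv j)

theorem IsSymmetry.evolutionaryDerivation_F (hF : F ∈ supported K Fvars)
    (hg : IsSymmetry F D Dbar g) : evolutionaryDerivation D Dbar g F = D (Dbar g) := by
  have hvars : F.vars ⊆ {.x, .y, .u 0, .u 1, .ubar 0} := fun v hv => by
    simpa [Fvars] using mem_supported.1 hF hv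
  rw [IsSymmetry] at hg
  rw [derivation_eq_sum_pderiv _ hvars]
  simp [Finset.sum_insert]
  linear_combination -hg

theorem IsSymmetry.evolutionaryDerivation_D_comm (hF : F ∈ supported K Fvars)
    (hDD : IsTotalDerPair F D Dbar) (hg : IsSymmetry F D Dbar g) {p : RR K}
    (hp : p ∈ supported K varsBelowUbarTwo) :
    evolutionaryDerivation D Dbar g (D p) = D (evolutionaryDerivation D Dbar g p) := by
  rw [← sub_eq_zero, ← Derivation.commutator_apply]
  refine derivation_eq_zero_of_forall_mem_vars fun v hv => ?_
  rw [Derivation.commutator_apply, sub_eq_zero]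
  cases v with
  | x => simp [hDD.hDx]
  | y => simp [hDD.hDy]
  | u i => simp [hDD.hDu, Function.iterate_succ_apply']
  | ubar j =>
    cases j with
    | zero => simp [hDD.hDubar, hg.evolutionaryDerivation_F hF]
    | succ j => exact absurd rfl (mem_supported.1 hp hv j)

theorem IsSymmetry.commute_evolutionaryDerivation (hF : F ∈ supported K Fvars)
    (hDD : IsTotalDerPair F D Dbar) (hg : IsSymmetry F D Dbar g) :
    Function.Commute (evolutionaryDerivation D Dbar g) Dbar := by
  refine Derivation.commute_of_commutator_eq_zero <| derivation_ext fun v => ?_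
  rw [Derivation.commutator_apply, Derivation.zero_apply, sub_eq_zero]
  cases v with
  | x => simp [hDD.hDbarx]
  | y => simp [hDD.hDbary]
  | u i =>
    cases i with
    | zero => simp [hDD.hDbaru0]
    | succ i =>
      have hDiF : evolutionaryDerivation D Dbar g (D^[i] F) = D^[i] (D (Dbar g)) := by
        rw [(hDD.mapsTo_supported_varsBelowUbarTwo hF).iterate_apply_comm
          (fun p hp => hg.evolutionaryDerivation_D_comm hF hDD hp)
          (supported_Fvars_le_varsBelowUbarTwo hF), hg.evolutionaryDerivation_F hF]
      rw [hDD.hDbaru, hDiF, evolutionaryDerivation_X_u, ← Function.iterate_succ_apply,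
        (hDD.commute.iterate_left (i + 1)) g]
  | ubar j => simp [hDD.hDbarubar, Function.iterate_succ_apply']

theorem frechet_eq_evolutionaryDerivation {p : RR K} (hp : p ∈ Fcal K) :
    frechet D p g = evolutionaryDerivation D Dbar g p := by
  symm
  rw [derivation_eq_finsum_pderiv, ← finsum_mem_univ,
    finsum_mem_inter_support_eq' _ _ (Set.range Var.u), finsum_mem_range fun _ _ => Var.u.inj]
  · simp [frechet]
  intro v hv
  simp only [Set.mem_univ, true_iff]
  cases v with
  | x | y => simp at hv
  | u i => exact ⟨i, rfl⟩
  | ubar j =>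
    simp [pderiv_eq_zero_of_notMem_vars fun h => mem_supported.1 hp h j rfl] at hv

end Symmetries

variable {K : Type*} [Field K] [CharZero K]

/-- the Fréchet derivative of an x-integral maps any symmetry to an
x-integral: D̄(W_*(g)) = 0. -/
theorem statement9
    (F : RR K) (hF : F ∈ MvPolynomial.supported K Fvars)
    (D Dbar : Derivation K (RR K) (RR K)) (hDD : IsTotalDerPair F D Dbar)
    (W : RR K) (hWF : W ∈ Fcal K) (hWint : Dbar W = 0)
    (g : RR K) (hg : IsSymmetry F D Dbar g) :
    Dbar (frechet D W g) = 0 := by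
  rw [frechet_eq_evolutionaryDerivation (Dbar := Dbar) hWF,
    ← hg.commute_evolutionaryDerivation hF hDD W, hWint, map_zero]
end
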